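/- arXiv:2004.04515 — 2 statements merged into one kernel-verified Lean document; each statement's English description precedes it below -/
import Mathlib

section
/- Let λ₁, λ₂ ≥ 0, a₁, a₂, μ₁, μ₂ > 0 with λ₂μ₁ ≠ λ₁a₂, and let (u⋆, v⋆) be the corresponding steady state: (u⋆,v⋆) = ((λ₁μ₂+λ₂a₁)/(μ₁μ₂+a₁a₂), (λ₂μ₁−λ₁a₂)/(μ₁μ₂+a₁a₂)) if λ₂μ₁ > λ₁a₂ and (λ₁/μ₁, 0) otherwise. Then f_u(u⋆,v⋆) < 0 and g_v(u⋆,v⋆) < 0, where f(u,v) = u(λ₁ − μ₁u + a₁v) and g(u,v) = v(λ₂ − μ₂v − a₂u). -/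
/-!
At an equilibrium where both species are present, the per-capita growth rates
`λ₁ - μ₁ u + a₁ v` and `λ₂ - μ₂ v - a₂ u` vanish, so `f_u = -μ₁ u⋆` and `g_v = -μ₂ v⋆`, both
negative since `u⋆, v⋆ > 0`. At the semi-trivial equilibrium `(λ₁/μ₁, 0)` one has `f_u = -λ₁`
and `g_v = (λ₂ μ₁ - λ₁ a₂)/μ₁`, which is negative exactly when the second species cannot invade.
-/

section SteadyStates

variable {l₁ l₂ a₁ a₂ μ₁ μ₂ : ℝ}

theorem diag_jacobian_neg_of_growth_rates_eq_zero {u v : ℝ} (hμ₁ : 0 < μ₁) (hμ₂ : 0 < μ₂)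
    (hu : 0 < u) (hv : 0 < v) (hf : l₁ - μ₁ * u + a₁ * v = 0) (hg : l₂ - μ₂ * v - a₂ * u = 0) :
    l₁ - 2 * μ₁ * u + a₁ * v < 0 ∧ l₂ - 2 * μ₂ * v - a₂ * u < 0 :=
  ⟨by nlinarith [mul_pos hμ₁ hu], by nlinarith [mul_pos hμ₂ hv]⟩

theorem coexistence_growth_rates_eq_zero (hD : μ₁ * μ₂ + a₁ * a₂ ≠ 0) :
    l₁ - μ₁ * ((l₁ * μ₂ + l₂ * a₁) / (μ₁ * μ₂ + a₁ * a₂))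
        + a₁ * ((l₂ * μ₁ - l₁ * a₂) / (μ₁ * μ₂ + a₁ * a₂)) = 0 ∧
      l₂ - μ₂ * ((l₂ * μ₁ - l₁ * a₂) / (μ₁ * μ₂ + a₁ * a₂))
        - a₂ * ((l₁ * μ₂ + l₂ * a₁) / (μ₁ * μ₂ + a₁ * a₂)) = 0 := by
  simp only [div_eq_mul_inv]
  exact ⟨by linear_combination (-l₁) * mul_inv_cancel₀ hD,
    by linear_combination (-l₂) * mul_inv_cancel₀ hD⟩

theorem coexistence_pos (hl₁ : 0 ≤ l₁) (ha₁ : 0 < a₁) (ha₂ : 0 < a₂) (hμ₁ : 0 < μ₁)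
    (hμ₂ : 0 < μ₂) (hinv : l₁ * a₂ < l₂ * μ₁) :
    0 < (l₁ * μ₂ + l₂ * a₁) / (μ₁ * μ₂ + a₁ * a₂) ∧
      0 < (l₂ * μ₁ - l₁ * a₂) / (μ₁ * μ₂ + a₁ * a₂) := by
  have hD : 0 < μ₁ * μ₂ + a₁ * a₂ := by positivity
  have hl₂ : 0 < l₂ := pos_of_mul_pos_left ((mul_nonneg hl₁ ha₂.le).trans_lt hinv) hμ₁.le
  exact ⟨div_pos (by positivity) hD, div_pos (sub_pos.mpr hinv) hD⟩

theorem diag_jacobian_neg_at_semitrivial (hl₂ : 0 ≤ l₂) (ha₂ : 0 < a₂) (hμ₁ : 0 < μ₁)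
    (hinv : l₂ * μ₁ < l₁ * a₂) :
    l₁ - 2 * μ₁ * (l₁ / μ₁) + a₁ * 0 < 0 ∧ l₂ - 2 * μ₂ * 0 - a₂ * (l₁ / μ₁) < 0 := by
  have hl₁ : 0 < l₁ := pos_of_mul_pos_left ((mul_nonneg hl₂ hμ₁.le).trans_lt hinv) ha₂.le
  have hu : μ₁ * (l₁ / μ₁) = l₁ := mul_div_cancel₀ l₁ hμ₁.ne'
  have hv : a₂ * (l₁ / μ₁) = l₁ * a₂ / μ₁ := by ring
  refine ⟨by linarith, ?_⟩
  rw [hv, mul_zero, sub_zero, sub_neg, lt_div_iff₀ hμ₁]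
  exact hinv

end SteadyStates

/-- If `λ₁, λ₂ ≥ 0`, `a₁, a₂, μ₁, μ₂ > 0` and `λ₂ μ₁ ≠ λ₁ a₂`, then at the corresponding
steady state `(u⋆, v⋆)` one has `f_u(u⋆,v⋆) < 0` and `g_v(u⋆,v⋆) < 0`, where
`f_u(u,v) = λ₁ - 2 μ₁ u + a₁ v` and `g_v(u,v) = λ₂ - 2 μ₂ v - a₂ u`. -/
theorem steady_state_strict_stability
    (l₁ l₂ a₁ a₂ μ₁ μ₂ : ℝ) (hl₁ : 0 ≤ l₁) (hl₂ : 0 ≤ l₂)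
    (ha₁ : 0 < a₁) (ha₂ : 0 < a₂) (hμ₁ : 0 < μ₁) (hμ₂ : 0 < μ₂)
    (hne : l₂ * μ₁ ≠ l₁ * a₂)
    (ustar vstar : ℝ)
    (hstar : (l₁ * a₂ < l₂ * μ₁ ∧
        ustar = (l₁ * μ₂ + l₂ * a₁) / (μ₁ * μ₂ + a₁ * a₂) ∧
        vstar = (l₂ * μ₁ - l₁ * a₂) / (μ₁ * μ₂ + a₁ * a₂)) ∨
      (¬ l₁ * a₂ < l₂ * μ₁ ∧ ustar = l₁ / μ₁ ∧ vstar = 0)) :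
    l₁ - 2 * μ₁ * ustar + a₁ * vstar < 0 ∧ l₂ - 2 * μ₂ * vstar - a₂ * ustar < 0 := by
  rcases hstar with ⟨hinv, rfl, rfl⟩ | ⟨hinv, rfl, rfl⟩
  · obtain ⟨hu, hv⟩ := coexistence_pos hl₁ ha₁ ha₂ hμ₁ hμ₂ hinv
    obtain ⟨hf, hg⟩ := coexistence_growth_rates_eq_zero (l₁ := l₁) (l₂ := l₂)
      (by positivity : μ₁ * μ₂ + a₁ * a₂ ≠ 0)
    exact diag_jacobian_neg_of_growth_rates_eq_zero hμ₁ hμ₂ hu hv hf hg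
  · exact diag_jacobian_neg_at_semitrivial hl₂ ha₂ hμ₁ (lt_of_le_of_ne (not_lt.mp hinv) hne)
end

section
/- Let c₁, c₃, c₄, I₀ > 0. For every t ≥ 0, ∫₀^t e^{−c₁(t−s)} (c₃ I₀^{−1} + c₄ s)^{−2} ds ≤ (I₀²/(c₁ c₃²)) e^{−c₁ t/2} + (√c₁ c₃ I₀^{−1} + (√c₁ c₄/2) t)^{−2}. -/
/-! Split `[0, t]` at `t / 2`. On `[0, t / 2]` bound `(c₃ I₀⁻¹ + c₄ s)⁻²` by its value at `0` and
integrate the exponential over `(-∞, t / 2]`, which produces the decaying factor `e^{-c₁ t / 2}`;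
on `[t / 2, t]` bound it by its value at `t / 2` and the exponential's integral by `c₁⁻¹`. -/

open Real intervalIntegral Set MeasureTheory

theorem integral_exp_neg_mul_sub {c : ℝ} (hc : c ≠ 0) (t u v : ℝ) :
    ∫ s in u..v, exp (-c * (t - s)) = (exp (-c * (t - v)) - exp (-c * (t - u))) / c := by
  have hderiv (s : ℝ) : HasDerivAt (fun s => exp (-c * (t - s)) / c) (exp (-c * (t - s))) s := by
    have := ((((hasDerivAt_id s).const_sub t).const_mul (-c)).exp).div_const c
    field_simp at this ⊢
    simpa using this
  rw [integral_eq_sub_of_hasDerivAt (fun s _ => hderiv s)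
    (Continuous.intervalIntegrable (by fun_prop) u v)]
  ring

theorem integral_exp_neg_mul_sub_le {c : ℝ} (hc : 0 < c) (t u v : ℝ) :
    ∫ s in u..v, exp (-c * (t - s)) ≤ exp (-c * (t - v)) / c := by
  rw [integral_exp_neg_mul_sub hc.ne']
  gcongr
  linarith [exp_pos (-c * (t - u))]

theorem integral_mul_le_of_le_on {w g : ℝ → ℝ} {u v M : ℝ} (huv : u ≤ v)
    (hwg : IntervalIntegrable (fun s => w s * g s) volume u v)
    (hw : IntervalIntegrable w volume u v)
    (hw₀ : ∀ s ∈ Icc u v, 0 ≤ w s) (hgM : ∀ s ∈ Icc u v, g s ≤ M) :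
    ∫ s in u..v, w s * g s ≤ M * ∫ s in u..v, w s := by
  rw [← intervalIntegral.integral_const_mul]
  refine integral_mono_on huv hwg (hw.const_mul M) fun s hs => ?_
  rw [mul_comm M]
  exact mul_le_mul_of_nonneg_left (hgM s hs) (hw₀ s hs)

theorem integral_exp_neg_mul_sub_mul_le {c : ℝ} (hc : 0 < c) {g : ℝ → ℝ} {t u v M : ℝ}
    (huv : u ≤ v) (hg : ContinuousOn g (Icc u v)) (hgM : ∀ s ∈ Icc u v, g s ≤ M) (hM : 0 ≤ M) :
    ∫ s in u..v, exp (-c * (t - s)) * g s ≤ M * (exp (-c * (t - v)) / c) := by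
  have hexp : Continuous fun s => exp (-c * (t - s)) := by fun_prop
  have hg' : ContinuousOn g (uIcc u v) := by rwa [uIcc_of_le huv]
  calc ∫ s in u..v, exp (-c * (t - s)) * g s
      ≤ M * ∫ s in u..v, exp (-c * (t - s)) :=
        integral_mul_le_of_le_on huv (hexp.continuousOn.mul hg').intervalIntegrable
          (hexp.intervalIntegrable u v) (fun s _ => (exp_pos _).le) hgM
    _ ≤ M * (exp (-c * (t - v)) / c) := by gcongr; exact integral_exp_neg_mul_sub_le hc t u v

theorem antitoneOn_inv_sq_add_mul {a b : ℝ} (ha : 0 < a) (hb : 0 ≤ b) :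
    AntitoneOn (fun s => ((a + b * s) ^ 2)⁻¹) (Ici 0) := by
  intro r (hr : 0 ≤ r) s _ hrs
  have : 0 < a + b * r := by positivity
  dsimp only
  gcongr

theorem continuousOn_inv_sq_add_mul {a b : ℝ} (ha : 0 < a) (hb : 0 ≤ b) :
    ContinuousOn (fun s => ((a + b * s) ^ 2)⁻¹) (Ici 0) :=
  ContinuousOn.inv₀ (by fun_prop) fun s (hs : 0 ≤ s) => by positivity

/-- The convolution-type integral estimate from Lemma 4.8:
`∫₀ᵗ e^{-c₁(t-s)} (c₃ I₀⁻¹ + c₄ s)⁻² ds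
  ≤ (I₀²/(c₁ c₃²)) e^{-c₁ t/2} + (√c₁ c₃ I₀⁻¹ + (√c₁ c₄ / 2) t)⁻²`. -/
theorem convolution_integral_estimate
    (c₁ c₃ c₄ I₀ : ℝ) (hc₁ : 0 < c₁) (hc₃ : 0 < c₃) (hc₄ : 0 < c₄) (hI₀ : 0 < I₀) :
    ∀ t : ℝ, 0 ≤ t →
      (∫ s in (0 : ℝ)..t, Real.exp (-c₁ * (t - s)) * ((c₃ * I₀⁻¹ + c₄ * s) ^ 2)⁻¹)
        ≤ I₀ ^ 2 / (c₁ * c₃ ^ 2) * Real.exp (-c₁ * t / 2)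
          + ((Real.sqrt c₁ * c₃ * I₀⁻¹ + Real.sqrt c₁ * c₄ / 2 * t) ^ 2)⁻¹ := by
  intro t ht
  have ha : 0 < c₃ * I₀⁻¹ := by positivity
  have hφ := antitoneOn_inv_sq_add_mul ha hc₄.le
  have hφc := continuousOn_inv_sq_add_mul ha hc₄.le
  have hexp : Continuous fun s => exp (-c₁ * (t - s)) := by fun_prop
  have hint {u v : ℝ} (hu : 0 ≤ u) (hv : 0 ≤ v) :
      IntervalIntegrable (fun s => exp (-c₁ * (t - s)) * ((c₃ * I₀⁻¹ + c₄ * s) ^ 2)⁻¹) volume u v :=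
    (hexp.continuousOn.mul (hφc.mono fun s hs => (le_min hu hv).trans hs.1)).intervalIntegrable
  have hhalf : 0 ≤ t / 2 := by positivity
  rw [← integral_add_adjacent_intervals (hint le_rfl hhalf) (hint hhalf ht)]
  have hfirst := integral_exp_neg_mul_sub_mul_le (t := t) hc₁ hhalf
    (hφc.mono Icc_subset_Ici_self) (fun s hs => hφ (le_refl (0 : ℝ)) hs.1 hs.1) (by positivity)
  have hsecond := integral_exp_neg_mul_sub_mul_le (t := t) hc₁ (by linarith : t / 2 ≤ t)
    (hφc.mono (Icc_subset_Ici_iff (by linarith) |>.2 hhalf))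
    (fun s hs => hφ hhalf (hhalf.trans hs.1) hs.1) (by positivity)
  refine (add_le_add hfirst hsecond).trans_eq ?_
  have hsqrt : sqrt c₁ ^ 2 = c₁ := sq_sqrt hc₁.le
  congr 1
  · rw [show -c₁ * (t - t / 2) = -c₁ * t / 2 by ring]
    dsimp only
    field_simp
    ring
  · rw [show (sqrt c₁ * c₃ * I₀⁻¹ + sqrt c₁ * c₄ / 2 * t) ^ 2
        = c₁ * (c₃ * I₀⁻¹ + c₄ * (t / 2)) ^ 2 by
          linear_combination (c₃ * I₀⁻¹ + c₄ * (t / 2)) ^ 2 * hsqrt]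
    simp
end
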